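/- Let n be even and let x satisfy 6 ≤ x ≤ n-4 . Then the sequence d = (n-1, n-1, n-1, x, …, x, 3, 3, 3) of length n (with n-6 copies of x) is graphic. -/

import Mathlib

/-!
Take an `(x - 3)`-regular graph on `n - 6` vertices, add three isolated vertices, and join the
result with a triangle: the triangle vertices become adjacent to everything (degree `n - 1`), the
regular part gains `3` (degree `x`) and the isolated vertices get degree `3`.
A `k`-regular graph on `m` vertices exists whenever `k < m` and `m k` is even: the circulant graph
on `ZMod m` with jumps `±1, …, ±⌊k/2⌋`, together with `m/2` when `k` is odd.
-/

/-- A finite list of naturals is graphic if it is realized as the degree sequence of a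
simple graph. -/
def IsGraphicList (l : List ℕ) : Prop :=
  ∃ (G : SimpleGraph (Fin l.length)) (_ : DecidableRel G.Adj), ∀ i, G.degree i = l.get i

open Finset

namespace SimpleGraph

variable {V W : Type*}

theorem degree_circulantGraph [Fintype V] [AddGroup V] [DecidableEq V] {s : Finset V}
    (hs₀ : 0 ∉ s) (hs_neg : ∀ a ∈ s, -a ∈ s) (v : V) :
    (circulantGraph (s : Set V)).degree v = #s := by
  have hsymm : ∀ a, -a ∈ s ↔ a ∈ s := fun a => ⟨fun h => by simpa using hs_neg _ h, hs_neg a⟩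
  have : (circulantGraph (s : Set V)).neighborFinset v = s.map (Equiv.addRight v).toEmbedding := by
    ext w
    simp only [mem_neighborFinset, circulantGraph_adj, mem_coe, mem_map_equiv,
      Equiv.addRight_symm, Equiv.coe_addRight]
    rw [← neg_sub, hsymm, or_self, ← sub_eq_add_neg]
    refine ⟨And.right, fun h => ⟨fun hvw => hs₀ ?_, h⟩⟩
    rwa [hvw, sub_self] at h
  rw [← card_neighborFinset_eq_degree, this, card_map]

variable (G : SimpleGraph V) (H : SimpleGraph W)

def join : SimpleGraph (V ⊕ W) := (G ⊕g H) ⊔ completeBipartiteGraph V W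

section Adj

variable {G H} {v v' : V} {w w' : W}

@[simp] theorem join_adj_inl_inl : (G.join H).Adj (.inl v) (.inl v') ↔ G.Adj v v' := by simp [join]

@[simp] theorem join_adj_inr_inr : (G.join H).Adj (.inr w) (.inr w') ↔ H.Adj w w' := by simp [join]

@[simp] theorem join_adj_inl_inr : (G.join H).Adj (.inl v) (.inr w) := by simp [join]

@[simp] theorem join_adj_inr_inl : (G.join H).Adj (.inr w) (.inl v) := by simp [join]

end Adj

section Degree

variable [DecidableRel G.Adj] [DecidableRel H.Adj]

instance : DecidableRel (G ⊕g H).Adj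
  | .inl _, .inl _ => inferInstanceAs (Decidable (G.Adj _ _))
  | .inr _, .inr _ => inferInstanceAs (Decidable (H.Adj _ _))
  | .inl _, .inr _ | .inr _, .inl _ => isFalse (by simp)

instance : DecidableRel (G.join H).Adj
  | .inl v, .inl v' => decidable_of_iff (G.Adj v v') join_adj_inl_inl.symm
  | .inr w, .inr w' => decidable_of_iff (H.Adj w w') join_adj_inr_inr.symm
  | .inl _, .inr _ => isTrue join_adj_inl_inr
  | .inr _, .inl _ => isTrue join_adj_inr_inl

variable [Fintype V] [Fintype W]

@[simp]
theorem degree_sum_inl (v : V) : (G ⊕g H).degree (.inl v) = G.degree v := by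
  have : (G ⊕g H).neighborFinset (.inl v) = (G.neighborFinset v).disjSum ∅ := by
    ext (w | w) <;> simp
  rw [← card_neighborFinset_eq_degree, this, card_disjSum, card_empty, add_zero,
    card_neighborFinset_eq_degree]

@[simp]
theorem degree_sum_inr (w : W) : (G ⊕g H).degree (.inr w) = H.degree w := by
  have : (G ⊕g H).neighborFinset (.inr w) = (∅ : Finset V).disjSum (H.neighborFinset w) := by
    ext (u | u) <;> simp
  rw [← card_neighborFinset_eq_degree, this, card_disjSum, card_empty, zero_add,
    card_neighborFinset_eq_degree]

@[simp]
theorem degree_join_inl (v : V) : (G.join H).degree (.inl v) = G.degree v + Fintype.card W := by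
  have : (G.join H).neighborFinset (.inl v) = (G.neighborFinset v).disjSum univ := by
    ext (w | w) <;> simp
  rw [← card_neighborFinset_eq_degree, this, card_disjSum, card_univ,
    card_neighborFinset_eq_degree]

@[simp]
theorem degree_join_inr (w : W) : (G.join H).degree (.inr w) = H.degree w + Fintype.card V := by
  have : (G.join H).neighborFinset (.inr w) = univ.disjSum (H.neighborFinset w) := by
    ext (u | u) <;> simp
  rw [← card_neighborFinset_eq_degree, this, card_disjSum, card_univ,
    card_neighborFinset_eq_degree, add_comm]

end Degree

end SimpleGraph

-- The jumps as residues in `[0, m)`: `m - j` stands for `-j`.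
def regularJumps (m k : ℕ) : Finset ℕ :=
  Icc 1 (k / 2) ∪ Icc (m - k / 2) (m - 1) ∪ if k % 2 = 1 then {m / 2} else ∅

theorem mem_regularJumps {m k a : ℕ} : a ∈ regularJumps m k ↔
    (1 ≤ a ∧ a ≤ k / 2) ∨ (m - k / 2 ≤ a ∧ a ≤ m - 1) ∨ (k % 2 = 1 ∧ a = m / 2) := by
  unfold regularJumps
  split_ifs with hk
  · simp only [hk, mem_union, mem_Icc, mem_singleton, true_and, or_assoc]
  · simp [hk]

section RegularJumps

variable {m k : ℕ} (hk : k < m)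
include hk

theorem pos_lt_of_mem_regularJumps {a : ℕ} (ha : a ∈ regularJumps m k) : 0 < a ∧ a < m := by
  rw [mem_regularJumps] at ha
  omega

theorem sub_mem_regularJumps (hmk : k % 2 = 0 ∨ m % 2 = 0) {a : ℕ} (ha : a ∈ regularJumps m k) :
    m - a ∈ regularJumps m k := by
  rw [mem_regularJumps] at ha ⊢
  omega

theorem card_regularJumps : #(regularJumps m k) = k := by
  have hdisj : Disjoint (Icc 1 (k / 2)) (Icc (m - k / 2) (m - 1)) :=
    disjoint_left.2 fun a ha hb => by simp only [mem_Icc] at ha hb; omega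
  unfold regularJumps
  rw [card_union_of_disjoint, card_union_of_disjoint hdisj, Nat.card_Icc, Nat.card_Icc]
  · split_ifs <;> simp <;> omega
  · split_ifs
    · simp only [disjoint_singleton_right, mem_union, mem_Icc]; omega
    · exact disjoint_empty_right _

end RegularJumps

def regularJumpSet (m k : ℕ) : Finset (ZMod m) := (regularJumps m k).image Nat.cast

section RegularJumpSet

variable {m k : ℕ} (hk : k < m)
include hk

theorem card_regularJumpSet : #(regularJumpSet m k) = k := by
  rw [regularJumpSet, card_image_of_injOn, card_regularJumps hk]
  intro a ha b hb hab
  rw [← ZMod.val_cast_of_lt (pos_lt_of_mem_regularJumps hk ha).2,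
    ← ZMod.val_cast_of_lt (pos_lt_of_mem_regularJumps hk hb).2]
  exact congrArg ZMod.val hab

theorem zero_notMem_regularJumpSet : (0 : ZMod m) ∉ regularJumpSet m k := by
  simp only [regularJumpSet, mem_image, not_exists, not_and]
  intro a ha ha0
  have := congrArg ZMod.val ha0
  rw [ZMod.val_cast_of_lt (pos_lt_of_mem_regularJumps hk ha).2, ZMod.val_zero] at this
  exact (pos_lt_of_mem_regularJumps hk ha).1.ne' this

theorem neg_mem_regularJumpSet (hmk : k % 2 = 0 ∨ m % 2 = 0) {s : ZMod m}
    (hs : s ∈ regularJumpSet m k) : -s ∈ regularJumpSet m k := by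
  obtain ⟨a, ha, rfl⟩ := mem_image.1 hs
  refine mem_image.2 ⟨m - a, sub_mem_regularJumps hk hmk ha, ?_⟩
  rw [Nat.cast_sub (pos_lt_of_mem_regularJumps hk ha).2.le, ZMod.natCast_self, zero_sub]

end RegularJumpSet

theorem isGraphicList_of_equiv {V : Type*} [Fintype V] (G : SimpleGraph V) [DecidableRel G.Adj]
    {l : List ℕ} (e : V ≃ Fin l.length) (h : ∀ v, G.degree v = l.get (e v)) :
    IsGraphicList l := by
  classical
  refine ⟨G.map e.toEmbedding, inferInstance, fun i => ?_⟩
  obtain ⟨v, rfl⟩ := e.surjective i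
  rw [← h, ← (SimpleGraph.Iso.map e G).degree_eq]
  rfl

theorem isGraphicList_replicate {m k : ℕ} (hk : k < m) (hmk : Even (m * k)) :
    IsGraphicList (List.replicate m k) := by
  have : NeZero m := ⟨by omega⟩
  have hpar : k % 2 = 0 ∨ m % 2 = 0 := by
    rw [← Nat.even_iff, ← Nat.even_iff, or_comm]
    exact Nat.even_mul.1 hmk
  refine isGraphicList_of_equiv (SimpleGraph.circulantGraph (regularJumpSet m k : Set (ZMod m)))
    (Fintype.equivFinOfCardEq (by simp)) fun v => ?_
  rw [SimpleGraph.degree_circulantGraph (zero_notMem_regularJumpSet hk)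
    (fun _ => neg_mem_regularJumpSet hk hpar) v, card_regularJumpSet hk]
  simp

theorem IsGraphicList.join_top_sum_bot {l : List ℕ} (hl : IsGraphicList l) (a b : ℕ) :
    IsGraphicList
      (List.replicate a (a - 1 + (l.length + b)) ++ l.map (· + a) ++ List.replicate b a) := by
  obtain ⟨H, _, hH⟩ := hl
  refine isGraphicList_of_equiv ((⊤ : SimpleGraph (Fin a)).join (H ⊕g (⊥ : SimpleGraph (Fin b))))
    ((Equiv.sumCongr (Equiv.refl _) finSumFinEquiv).trans
      (finSumFinEquiv.trans (finCongr (by simp)))) ?_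
  rintro (i | v | j) <;> simp [hH]

/-- For even `n` and `6 ≤ x ≤ n-4`, the sequence `(n-1, n-1, n-1, x, …, x, 3, 3, 3)`
of length `n` (with `n-6` copies of `x`) is graphic. -/
theorem seq_k3_graphic {n x : ℕ} (hn : Even n) (hx1 : 6 ≤ x) (hx2 : x ≤ n - 4) :
    IsGraphicList ([n - 1, n - 1, n - 1] ++ List.replicate (n - 6) x ++ [3, 3, 3]) := by
  obtain ⟨m, rfl⟩ : ∃ m, n = m + 6 := ⟨n - 6, by omega⟩
  have hm : Even m := (Nat.even_add.1 hn).2 (by decide)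
  have hreg : IsGraphicList (List.replicate m (x - 3)) :=
    isGraphicList_replicate (by omega) (hm.mul_right _)
  convert hreg.join_top_sum_bot 3 3 using 1
  simp [Nat.sub_add_cancel (by omega : 3 ≤ x)]
  omega
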